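/- For finite discrete random variables, if $J(\mathcal{A}) < 0$ for subsets $\mathcal{S} \subseteq \{1,\ldots,N\}$, $\mathcal{A} \subseteq \{1,\ldots,N\}$ with $1\in\mathcal{S}$, $1\in\mathcal{A}$, then $J(\mathcal{S}\cap\mathcal{A}) < H(U(\mathcal{S}^c), X(\mathcal{S}^c)\mid X(\mathcal{A}^c), U(\mathcal{A}^c), Q) - \sum_{k\in\mathcal{S}^c\setminus\mathcal{A}^c}[H(U_k\mid Y_k, X_k, Q) + H(X_k\mid Q)]$, where $J$ is defined by $J(\mathcal{B}) := H(U(\mathcal{B}^c), X(\mathcal{B}^c)\mid Q) - \sum_{k\in\mathcal{B}^c}[H(U_k\mid X_k,Y_k,Q) + H(X_k\mid Q)]$. -/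

import Mathlib

open MeasureTheory Finset

namespace DDF

variable {Ω : Type*} [MeasurableSpace Ω]

/-- Probability that a random variable `X` takes the value `a`. -/
noncomputable def pr (μ : Measure Ω) {α : Type*} (X : Ω → α) (a : α) : ℝ :=
  (μ (X ⁻¹' {a})).toReal

/-- Shannon entropy (base 2) of a finitely-valued random variable. -/
noncomputable def ent (μ : Measure Ω) {α : Type*} [Fintype α] (X : Ω → α) : ℝ :=
  -∑ a : α, pr μ X a * Real.logb 2 (pr μ X a)

/-- Conditional entropy `H(X | Y)`. -/
noncomputable def condEnt (μ : Measure Ω) {α β : Type*} [Fintype α] [Fintype β]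
    (X : Ω → α) (Y : Ω → β) : ℝ :=
  ent μ (fun ω => (X ω, Y ω)) - ent μ Y

/-- Mutual information `I(X; Y)`. -/
noncomputable def mi (μ : Measure Ω) {α β : Type*} [Fintype α] [Fintype β]
    (X : Ω → α) (Y : Ω → β) : ℝ :=
  ent μ X + ent μ Y - ent μ (fun ω => (X ω, Y ω))

/-- Conditional mutual information `I(X; Y | Z)`. -/
noncomputable def cmi (μ : Measure Ω) {α β γ : Type*} [Fintype α] [Fintype β] [Fintype γ]
    (X : Ω → α) (Y : Ω → β) (Z : Ω → γ) : ℝ :=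
  condEnt μ X Z - condEnt μ X (fun ω => (Y ω, Z ω))

/-- The tuple `(X_k : k ∈ S)` as a single random variable. -/
def tup {Ω α : Type*} (X : ℕ → Ω → α) (S : Finset ℕ) (ω : Ω) : {k // k ∈ S} → α :=
  fun k => X k.1 ω

end DDF

namespace DDF

/-- The functional `J(B) = H(U(Bᶜ), X(Bᶜ) | Q) - ∑_{k∈Bᶜ}[H(U_k | X_k, Y_k, Q) + H(X_k | Q)]`,
with complements taken within `[1:N]`. -/
noncomputable def J {Ω α β γ δ : Type*} [MeasurableSpace Ω]
    [Fintype α] [Fintype β] [Fintype γ] [Fintype δ]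
    (μ : Measure Ω) (N : ℕ) (X : ℕ → Ω → α) (U : ℕ → Ω → β) (Y : ℕ → Ω → γ) (Q : Ω → δ)
    (B : Finset ℕ) : ℝ :=
  condEnt μ (fun ω => (tup U (Finset.Icc 1 N \ B) ω, tup X (Finset.Icc 1 N \ B) ω)) Q
    - ∑ k ∈ Finset.Icc 1 N \ B,
        (condEnt μ (U k) (fun ω => (X k ω, Y k ω, Q ω)) + condEnt μ (X k) Q)

end DDF

/-!
Write `D = (S ∩ A)ᶜ = Sᶜ ∪ Aᶜ`. The tuple `(U(D), X(D))` is a function of `(U(Sᶜ), X(Sᶜ))` and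
`(X(Aᶜ), U(Aᶜ))`, so by monotonicity of entropy under functions and the chain rule
`H(U(D), X(D) | Q) ≤ H(U(Sᶜ), X(Sᶜ) | X(Aᶜ), U(Aᶜ), Q) + H(U(Aᶜ), X(Aᶜ) | Q)`.
Splitting the sum over `D` as `Aᶜ ⊔ (Sᶜ \ Aᶜ)` then gives `J(S ∩ A) ≤ (right-hand side) + J(A)`,
and `J(A) < 0` makes the inequality strict.
-/

namespace DDF

section Entropy

variable {Ω α β : Type*} [MeasurableSpace Ω] (μ : Measure Ω)

lemma pr_nonneg (W : Ω → α) (a : α) : 0 ≤ pr μ W a :=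
  ENNReal.toReal_nonneg

lemma pr_comp_apply_of_injective (W : Ω → α) {f : α → β} (hf : Function.Injective f) (a : α) :
    pr μ (fun ω => f (W ω)) (f a) = pr μ W a := by
  have : (fun ω => f (W ω)) ⁻¹' {f a} = W ⁻¹' {a} := by ext; simp [hf.eq_iff]
  rw [pr, this, pr]

lemma pr_comp_of_notMem_range (W : Ω → α) {f : α → β} {b : β} (hb : b ∉ Set.range f) :
    pr μ (fun ω => f (W ω)) b = 0 := by
  have : (fun ω => f (W ω)) ⁻¹' {b} = ∅ :=
    Set.eq_empty_of_forall_notMem fun ω h => hb ⟨W ω, h⟩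
  simp [pr, this]

lemma ent_comp_of_injective [Fintype α] [Fintype β] (W : Ω → α) {f : α → β}
    (hf : Function.Injective f) :
    ent μ (fun ω => f (W ω)) = ent μ W := by
  classical
  rw [ent, ent, ← Finset.sum_subset (Finset.subset_univ (Finset.univ.image f)), Finset.sum_image]
  · simp only [pr_comp_apply_of_injective μ W hf]
  · exact fun a _ a' _ h => hf h
  · intro b _ hb
    rw [pr_comp_of_notMem_range μ W (by simpa using hb), zero_mul]

lemma pr_comp_eq_sum [Fintype α] [MeasurableSpace α] [MeasurableSingletonClass α]
    [IsFiniteMeasure μ] [DecidableEq β] {W : Ω → α} (hW : Measurable W) (f : α → β) (b : β) :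
    pr μ (fun ω => f (W ω)) b = ∑ a with f a = b, pr μ W a := by
  change μ.real _ = ∑ a with f a = b, μ.real (W ⁻¹' {a})
  rw [sum_measureReal_preimage_singleton _ fun a _ => hW (measurableSet_singleton a)]
  congr 1
  ext ω
  simp

lemma mul_logb_le_mul_logb {b p q : ℝ} (hb : 1 < b) (hp : 0 ≤ p) (hpq : p ≤ q) :
    p * Real.logb b p ≤ p * Real.logb b q := by
  rcases hp.eq_or_lt with rfl | hp
  · simp
  · exact mul_le_mul_of_nonneg_left (Real.logb_le_logb_of_le hb hp hpq) hp.le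

lemma ent_comp_le [Fintype α] [Fintype β] [MeasurableSpace α] [MeasurableSingletonClass α]
    [IsFiniteMeasure μ]    {W : Ω → α} (hW : Measurable W) (f : α → β) :
    ent μ (fun ω => f (W ω)) ≤ ent μ W := by
  classical
  rw [ent, ent, neg_le_neg_iff, ← Finset.sum_fiberwise Finset.univ f]
  refine Finset.sum_le_sum fun b _ => ?_
  rw [pr_comp_eq_sum μ hW f b, Finset.sum_mul]
  exact Finset.sum_le_sum fun a ha => mul_logb_le_mul_logb one_lt_two (pr_nonneg μ W a)
    (Finset.single_le_sum (fun a' _ => pr_nonneg μ W a') ha)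

end Entropy

section CondEnt

variable {Ω α β γ δ : Type*} [MeasurableSpace Ω] [Fintype α] [Fintype β] [Fintype γ] [Fintype δ]
  (μ : Measure Ω)

lemma condEnt_comp_left_of_injective (W : Ω → α) (V : Ω → γ) {f : α → β}
    (hf : Function.Injective f) :
    condEnt μ (fun ω => f (W ω)) V = condEnt μ W V :=
  congrArg (· - ent μ V)
    (ent_comp_of_injective μ (fun ω => (W ω, V ω)) (hf.prodMap Function.injective_id))

lemma condEnt_comp_right_of_injective (W : Ω → α) (V : Ω → β) {g : β → γ}
    (hg : Function.Injective g) :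
    condEnt μ W (fun ω => g (V ω)) = condEnt μ W V := by
  rw [condEnt, condEnt, ent_comp_of_injective μ V hg]
  exact congrArg (· - ent μ V)
    (ent_comp_of_injective μ (fun ω => (W ω, V ω)) (Function.injective_id.prodMap hg))

lemma condEnt_le_condEnt_add_condEnt [MeasurableSpace α] [MeasurableSingletonClass α]
    [MeasurableSpace β] [MeasurableSingletonClass β] [MeasurableSpace δ]
    [MeasurableSingletonClass δ] [IsFiniteMeasure μ] {W : Ω → α} {V : Ω → β} {Q : Ω → δ}
    (hW : Measurable W) (hV : Measurable V) (hQ : Measurable Q) {Z : Ω → γ} (g : α × β → γ)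
    (hZ : ∀ ω, Z ω = g (W ω, V ω)) :
    condEnt μ Z Q ≤ condEnt μ W (fun ω => (V ω, Q ω)) + condEnt μ V Q := by
  have h := ent_comp_le μ (hW.prodMk (hV.prodMk hQ))
    (fun p : α × β × δ => (g (p.1, p.2.1), p.2.2))
  simp only [← hZ] at h
  simp only [condEnt]
  linarith

end CondEnt

section Tuples

variable {Ω α : Type*}

def tupGlue {B C : Finset ℕ} (x : {k // k ∈ B} → α) (y : {k // k ∈ C} → α) :
    {k // k ∈ B ∪ C} → α :=
  fun k => if h : k.1 ∈ B then x ⟨k.1, h⟩ else y ⟨k.1, (Finset.mem_union.1 k.2).resolve_left h⟩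

lemma tup_union (X : ℕ → Ω → α) (B C : Finset ℕ) (ω : Ω) :
    tup X (B ∪ C) ω = tupGlue (tup X B ω) (tup X C ω) := by
  funext k
  by_cases h : k.1 ∈ B <;> simp [tupGlue, tup, h]

lemma measurable_tup [MeasurableSpace Ω] [MeasurableSpace α] {X : ℕ → Ω → α}
    (hX : ∀ k, Measurable (X k)) (B : Finset ℕ) : Measurable (tup X B) :=
  measurable_pi_lambda _ fun k => hX k.1

variable {β δ : Type*} [MeasurableSpace Ω]
  [MeasurableSpace α] [MeasurableSingletonClass α] [Fintype α]
  [MeasurableSpace β] [MeasurableSingletonClass β] [Fintype β]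
  [MeasurableSpace δ] [MeasurableSingletonClass δ] [Fintype δ]
  (μ : Measure Ω) [IsFiniteMeasure μ] {X : ℕ → Ω → α} {U : ℕ → Ω → β} {Q : Ω → δ}

lemma condEnt_tup_union_le (hX : ∀ k, Measurable (X k)) (hU : ∀ k, Measurable (U k))
    (hQ : Measurable Q) (B C : Finset ℕ) :
    condEnt μ (fun ω => (tup U (B ∪ C) ω, tup X (B ∪ C) ω)) Q
      ≤ condEnt μ (fun ω => (tup U B ω, tup X B ω)) (fun ω => (tup X C ω, tup U C ω, Q ω))
        + condEnt μ (fun ω => (tup U C ω, tup X C ω)) Q := by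
  have hswap : condEnt μ (fun ω => (tup U C ω, tup X C ω)) Q
      = condEnt μ (fun ω => (tup X C ω, tup U C ω)) Q :=
    condEnt_comp_left_of_injective μ (fun ω => (tup X C ω, tup U C ω)) Q (f := Prod.swap)
      Prod.swap_injective
  have hassoc :
      condEnt μ (fun ω => (tup U B ω, tup X B ω)) (fun ω => (tup X C ω, tup U C ω, Q ω))
      = condEnt μ (fun ω => (tup U B ω, tup X B ω)) (fun ω => ((tup X C ω, tup U C ω), Q ω)) :=
    condEnt_comp_right_of_injective μ _ (fun ω => ((tup X C ω, tup U C ω), Q ω))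
      (g := Equiv.prodAssoc _ _ _) (Equiv.injective _)
  rw [hswap, hassoc]
  have hW : Measurable fun ω => (tup U B ω, tup X B ω) :=
    (measurable_tup hU B).prodMk (measurable_tup hX B)
  have hV : Measurable fun ω => (tup X C ω, tup U C ω) :=
    (measurable_tup hX C).prodMk (measurable_tup hU C)
  refine condEnt_le_condEnt_add_condEnt μ hW hV hQ
    (fun p => (tupGlue p.1.1 p.2.2, tupGlue p.1.2 p.2.1)) fun ω => ?_
  rw [tup_union, tup_union]

lemma J_inter_le {γ : Type*} [Fintype γ] (hX : ∀ k, Measurable (X k))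
    (hU : ∀ k, Measurable (U k)) (hQ : Measurable Q) (N : ℕ) (Y : ℕ → Ω → γ) (S A : Finset ℕ) :
    J μ N X U Y Q (S ∩ A)
      ≤ condEnt μ
          (fun ω => (tup U (Finset.Icc 1 N \ S) ω, tup X (Finset.Icc 1 N \ S) ω))
          (fun ω => (tup X (Finset.Icc 1 N \ A) ω, tup U (Finset.Icc 1 N \ A) ω, Q ω))
        - ∑ k ∈ (Finset.Icc 1 N \ S) \ (Finset.Icc 1 N \ A),
            (condEnt μ (U k) (fun ω => (X k ω, Y k ω, Q ω)) + condEnt μ (X k) Q)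
        + J μ N X U Y Q A := by
  have hsum := Finset.sum_sdiff
    (f := fun k => condEnt μ (U k) (fun ω => (X k ω, Y k ω, Q ω)) + condEnt μ (X k) Q)
    (Finset.subset_union_right (s₁ := Finset.Icc 1 N \ S) (s₂ := Finset.Icc 1 N \ A))
  rw [Finset.union_sdiff_right] at hsum
  have hent := condEnt_tup_union_le μ hX hU hQ (Finset.Icc 1 N \ S) (Finset.Icc 1 N \ A)
  rw [J, J, Finset.sdiff_inter_distrib_right]
  linarith

end Tuples

end DDF

open DDF in
theorem stmt11_general {Ω α β γ δ : Type*} [MeasurableSpace Ω]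
    [MeasurableSpace α] [MeasurableSingletonClass α] [Fintype α]
    [MeasurableSpace β] [MeasurableSingletonClass β] [Fintype β]
    [Fintype γ]
    [MeasurableSpace δ] [MeasurableSingletonClass δ] [Fintype δ]
    (μ : Measure Ω) [IsProbabilityMeasure μ] (N : ℕ)
    (X : ℕ → Ω → α) (U : ℕ → Ω → β) (Y : ℕ → Ω → γ) (Q : Ω → δ)
    (hX : ∀ k, Measurable (X k)) (hU : ∀ k, Measurable (U k))
    (hQ : Measurable Q)
    (S A : Finset ℕ)
    (hJA : J μ N X U Y Q A < 0) :
    J μ N X U Y Q (S ∩ A)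
      < condEnt μ
          (fun ω => (tup U (Finset.Icc 1 N \ S) ω, tup X (Finset.Icc 1 N \ S) ω))
          (fun ω => (tup X (Finset.Icc 1 N \ A) ω, tup U (Finset.Icc 1 N \ A) ω, Q ω))
        - ∑ k ∈ (Finset.Icc 1 N \ S) \ (Finset.Icc 1 N \ A),
            (condEnt μ (U k) (fun ω => (Y k ω, X k ω, Q ω)) + condEnt μ (X k) Q) := by
  have hreorder : ∀ k, condEnt μ (U k) (fun ω => (Y k ω, X k ω, Q ω))
      = condEnt μ (U k) (fun ω => (X k ω, Y k ω, Q ω)) := fun k =>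
    condEnt_comp_right_of_injective μ (U k) (fun ω => (X k ω, Y k ω, Q ω))
      (g := fun p : α × γ × δ => (p.2.1, p.1, p.2.2))
      (fun p q h => by simp_all [Prod.ext_iff])
  simp only [hreorder]
  linarith [J_inter_le μ hX hU hQ N Y S A]

open DDF in
/-- if `J(A) < 0` then
`J(S∩A) < H(U(Sᶜ), X(Sᶜ) | X(Aᶜ), U(Aᶜ), Q) - ∑_{k∈Sᶜ\Aᶜ}[H(U_k|Y_k,X_k,Q) + H(X_k|Q)]`
(strict-inequality step of Lemma 1, Appendix D). -/
theorem stmt11 {Ω α β γ δ : Type*} [MeasurableSpace Ω]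
    [MeasurableSpace α] [MeasurableSingletonClass α] [Fintype α]
    [MeasurableSpace β] [MeasurableSingletonClass β] [Fintype β]
    [MeasurableSpace γ] [MeasurableSingletonClass γ] [Fintype γ]
    [MeasurableSpace δ] [MeasurableSingletonClass δ] [Fintype δ]
    (μ : Measure Ω) [IsProbabilityMeasure μ] (N : ℕ)
    (X : ℕ → Ω → α) (U : ℕ → Ω → β) (Y : ℕ → Ω → γ) (Q : Ω → δ)
    (hX : ∀ k, Measurable (X k)) (hU : ∀ k, Measurable (U k)) (hY : ∀ k, Measurable (Y k))
    (hQ : Measurable Q)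
    (S A : Finset ℕ) (hS : S ⊆ Finset.Icc 1 N) (hA : A ⊆ Finset.Icc 1 N)
    (h1S : 1 ∈ S) (h1A : 1 ∈ A)
    (hJA : J μ N X U Y Q A < 0) :
    J μ N X U Y Q (S ∩ A)
      < condEnt μ
          (fun ω => (tup U (Finset.Icc 1 N \ S) ω, tup X (Finset.Icc 1 N \ S) ω))
          (fun ω => (tup X (Finset.Icc 1 N \ A) ω, tup U (Finset.Icc 1 N \ A) ω, Q ω))
        - ∑ k ∈ (Finset.Icc 1 N \ S) \ (Finset.Icc 1 N \ A),
            (condEnt μ (U k) (fun ω => (Y k ω, X k ω, Q ω)) + condEnt μ (X k) Q) :=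
  stmt11_general μ N X U Y Q hX hU hQ S A hJA
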